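/- arXiv:1004.5357 — 3 statements merged into one kernel-verified Lean document; each statement's English description precedes it below -/
import Mathlib

section
/- Let K be a field of characteristic 0 and J a finite set. The kernel of the derivation D on R_J (i.e. the algebra of u_2-semi-invariants) is generated as a K-algebra by the variables α₀ (α ∈ J) together with the brackets [α,β] := α₀β₁ − α₁β₀ (α, β ∈ J); that is, ker D = Algebra.adjoin K ({α₀ : α ∈ J} ∪ {α₀β₁ − α₁β₀ : α, β ∈ J}). -/
/-!
Grade `K[α₀, α₁ : α ∈ J]` by bidegree (degree in the `α₀`, degree in the `α₁`). The derivation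
`D = ∑ α₀ ∂/∂α₁` shifts the bidegree by `(1, -1)`, so every bihomogeneous component of an element
of `ker D` lies in `ker D`. For `F ∈ ker D` of bidegree `(s, t)`, Euler's identities and
`[∂/∂α₀, D] = ∂/∂α₁` give `∑_{α,β} [α,β] Ω_{αβ} F = 2 (s + 1) t F`, where
`Ω_{αβ} = ∂²/∂α₀∂β₁ - ∂²/∂β₀∂α₁` is Cayley's Ω-process. Each `Ω_{αβ} F` again lies in `ker D` and
has bidegree `(s - 1, t - 1)`, so induction on `t` reduces everything to `t = 0`, where `F` is a
polynomial in the `α₀` alone.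
-/

open MvPolynomial

namespace MvPolynomial

variable {R σ M M' : Type*}

lemma IsWeightedHomogeneous.map [CommSemiring R] [AddCommMonoid M] [AddCommMonoid M']
    {w : σ → M} {φ : MvPolynomial σ R} {m : M}
    (h : φ.IsWeightedHomogeneous w m) (f : M →+ M') :
    φ.IsWeightedHomogeneous (f ∘ w) (f m) := by
  intro d hd
  rw [← h hd, Finsupp.weight_apply, Finsupp.weight_apply, map_finsuppSum]
  simp only [Function.comp_apply, map_nsmul]

lemma IsWeightedHomogeneous.le_of_mem_vars [CommSemiring R] [AddCommMonoid M] [PartialOrder M]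
    [IsOrderedAddMonoid M] [CanonicallyOrderedAdd M] {w : σ → M} {φ : MvPolynomial σ R} {m : M}
    {i : σ} (h : φ.IsWeightedHomogeneous w m) (hi : i ∈ φ.vars) : w i ≤ m := by
  obtain ⟨d, hd, hdi⟩ := (mem_vars_iff_mem_support i).1 hi
  exact h (mem_support_iff.1 hd) ▸
    Finsupp.le_weight_of_ne_zero' w (Finsupp.mem_support_iff.1 hdi)

lemma IsWeightedHomogeneous.pderiv_tsub [CommSemiring R] [AddCancelCommMonoid M] [PartialOrder M]
    [IsOrderedAddMonoid M] [CanonicallyOrderedAdd M] [Sub M] [OrderedSub M]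
    {w : σ → M} {φ : MvPolynomial σ R} {m : M} (i : σ)
    (h : φ.IsWeightedHomogeneous w m) : (pderiv i φ).IsWeightedHomogeneous w (m - w i) := by
  by_cases hi : w i ≤ m
  · exact h.pderiv (tsub_add_cancel_of_le hi)
  · rw [pderiv_eq_zero_of_notMem_vars fun hv => hi (h.le_of_mem_vars hv)]
    exact isWeightedHomogeneous_zero R w _

lemma pderiv_pderiv_comm [CommRing R] (i j : σ) (φ : MvPolynomial σ R) :
    pderiv i (pderiv j φ) = pderiv j (pderiv i φ) := by
  classical
  have h : ⁅pderiv i, pderiv j⁆ = (0 : Derivation R (MvPolynomial σ R) (MvPolynomial σ R)) :=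
    derivation_ext fun k => by
      rw [Derivation.commutator_apply, pderiv_X, pderiv_X]
      simp [Pi.single_apply, apply_ite]
  exact sub_eq_zero.1 (congr($h φ))

lemma map_weightedHomogeneousComponent_eq_zero [CommSemiring R] [AddCommMonoid M]
    [AddCommMonoid M'] {w : σ → M} {w' : σ → M'} {g : M → M'} (hg : Function.Injective g)
    (L : MvPolynomial σ R →ₗ[R] MvPolynomial σ R)
    (hL : ∀ m φ, φ.IsWeightedHomogeneous w m → (L φ).IsWeightedHomogeneous w' (g m))
    {φ : MvPolynomial σ R} (hφ : L φ = 0) (m : M) :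
    L (weightedHomogeneousComponent w m φ) = 0 := by
  classical
  have hfin := weightedHomogeneousComponent_finsupp (w := w) φ
  have hsum : ∑ m' ∈ hfin.toFinset, L (weightedHomogeneousComponent w m' φ) = 0 := by
    rw [← map_sum, ← finsum_eq_sum _ hfin, sum_weightedHomogeneousComponent, hφ]
  have hL' := fun m' => hL m' _ (weightedHomogeneousComponent_isWeightedHomogeneous m' φ)
  by_cases hm : m ∈ hfin.toFinset
  · rw [← (hL' m).weightedHomogeneousComponent_same,
      ← map_zero (weightedHomogeneousComponent w' (g m)), ← hsum, map_sum,
      Finset.sum_eq_single_of_mem m hm fun m' _ hne =>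
        (hL' m').weightedHomogeneousComponent_ne _ (hg.ne hne.symm)]
  · rw [hfin.mem_toFinset, Function.notMem_support] at hm
    rw [hm, map_zero]

end MvPolynomial

namespace BinaryForms

variable {K : Type*} [Field K] {J : Type*} {F : MvPolynomial (J × Fin 2) K} {s t : ℕ}

variable (J) in
def bideg : J × Fin 2 → ℕ × ℕ := fun v => if v.2 = 0 then (1, 0) else (0, 1)

@[simp] lemma bideg_zero (α : J) : bideg J (α, 0) = (1, 0) := if_pos rfl

@[simp] lemma bideg_one (α : J) : bideg J (α, 1) = (0, 1) := if_neg one_ne_zero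

/-- `bideg` read in `ℤ × ℤ`, where the polarization shifts bidegrees by `(1, -1)` injectively. -/
def castBideg (J : Type*) : J × Fin 2 → ℤ × ℤ :=
  ((Nat.castAddMonoidHom ℤ).prodMap (Nat.castAddMonoidHom ℤ)) ∘ bideg J

variable (K) in
noncomputable def bracket (α β : J) : MvPolynomial (J × Fin 2) K :=
  X (α, 0) * X (β, 1) - X (α, 1) * X (β, 0)

lemma bracket_swap (α β : J) : bracket K β α = -bracket K α β := by
  simp only [bracket]
  ring

noncomputable def cayleyOmega (α β : J) (F : MvPolynomial (J × Fin 2) K) :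
    MvPolynomial (J × Fin 2) K :=
  pderiv (α, 0) (pderiv (β, 1) F) - pderiv (β, 0) (pderiv (α, 1) F)

lemma isWeightedHomogeneous_cayleyOmega (h : F.IsWeightedHomogeneous (bideg J) (s, t))
    (α β : J) : (cayleyOmega α β F).IsWeightedHomogeneous (bideg J) (s - 1, t - 1) := by
  have hω := fun (α β : J) => (h.pderiv_tsub (β, 1)).pderiv_tsub (α, 0)
  simp only [bideg_zero, bideg_one, Prod.mk_sub_mk, tsub_zero] at hω
  exact (hω α β).sub (hω β α)

variable (K J) in
noncomputable def bracketAlgebra : Subalgebra K (MvPolynomial (J × Fin 2) K) :=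
  Algebra.adjoin K ({P | ∃ α : J, P = X (α, 0)} ∪ {P | ∃ α β : J, P = bracket K α β})

lemma mem_bracketAlgebra_of_isWeightedHomogeneous_zero
    (h : F.IsWeightedHomogeneous (bideg J) (s, 0)) : F ∈ bracketAlgebra K J := by
  have hvars : (F.vars : Set (J × Fin 2)) ⊆ {v | v.2 = 0} := by
    rintro ⟨α, i⟩ hv
    have hle := h.le_of_mem_vars hv
    fin_cases i
    · rfl
    · simp at hle
  have hF := mem_supported.2 hvars
  rw [supported_eq_adjoin_X] at hF
  refine Algebra.adjoin_mono ?_ hF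
  rintro _ ⟨⟨α, i⟩, hi, rfl⟩
  exact Or.inl ⟨α, by rw [show i = 0 from hi]⟩

variable [Fintype J]

lemma sum_X_zero_mul_pderiv (h : F.IsWeightedHomogeneous (bideg J) (s, t)) :
    ∑ α : J, X (α, 0) * pderiv (α, 0) F = s • F := by
  have euler := (h.map (AddMonoidHom.fst ℕ ℕ)).sum_weight_X_mul_pderiv
  rw [Fintype.sum_prod_type] at euler
  simpa [Fin.sum_univ_two, bideg] using euler

lemma sum_X_one_mul_pderiv (h : F.IsWeightedHomogeneous (bideg J) (s, t)) :
    ∑ α : J, X (α, 1) * pderiv (α, 1) F = t • F := by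
  have euler := (h.map (AddMonoidHom.snd ℕ ℕ)).sum_weight_X_mul_pderiv
  rw [Fintype.sum_prod_type] at euler
  simpa [Fin.sum_univ_two, bideg] using euler

variable (K J) in
noncomputable def polarization :
    Derivation K (MvPolynomial (J × Fin 2) K) (MvPolynomial (J × Fin 2) K) :=
  ∑ α : J, (X (α, 0) : MvPolynomial (J × Fin 2) K) • pderiv (α, 1)

lemma polarization_apply (F : MvPolynomial (J × Fin 2) K) :
    polarization K J F = ∑ α : J, X (α, 0) * pderiv (α, 1) F := by
  rw [polarization, ← Derivation.coeFnAddMonoidHom_apply, map_sum, Finset.sum_apply]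
  rfl

lemma mkDerivation_eq_polarization :
    mkDerivation K (fun v : J × Fin 2 => if v.2 = 0 then 0 else X (v.1, 0)) =
      polarization K J := by
  classical
  refine derivation_ext fun ⟨α, i⟩ => ?_
  rw [mkDerivation_X, polarization_apply]
  fin_cases i <;> simp [pderiv_X, Pi.single_apply]

@[simp] lemma polarization_X_zero (α : J) : polarization K J (X (α, 0)) = 0 := by
  rw [← mkDerivation_eq_polarization, mkDerivation_X, if_pos rfl]

@[simp] lemma polarization_X_one (α : J) : polarization K J (X (α, 1)) = X (α, 0) := by
  rw [← mkDerivation_eq_polarization, mkDerivation_X, if_neg one_ne_zero]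

lemma commutator_pderiv_zero_polarization (α : J) :
    ⁅pderiv (R := K) ((α, 0) : J × Fin 2), polarization K J⁆ = pderiv (α, 1) := by
  classical
  refine derivation_ext fun ⟨β, i⟩ => ?_
  rw [Derivation.commutator_apply, polarization_apply, polarization_apply]
  fin_cases i <;> simp [pderiv_X, Pi.single_apply, apply_ite, Finset.sum_ite_eq]

lemma commutator_pderiv_one_polarization (α : J) :
    ⁅pderiv (R := K) ((α, 1) : J × Fin 2), polarization K J⁆ = 0 := by
  classical
  refine derivation_ext fun ⟨β, i⟩ => ?_
  rw [Derivation.commutator_apply, polarization_apply, polarization_apply]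
  fin_cases i <;> simp [pderiv_X, Pi.single_apply, apply_ite, Finset.sum_ite_eq]

lemma polarization_pderiv_zero_of_eq_zero (hF : polarization K J F = 0) (α : J) :
    polarization K J (pderiv (α, 0) F) = -pderiv (α, 1) F := by
  have h := congr($(commutator_pderiv_zero_polarization (K := K) α) F)
  rw [Derivation.commutator_apply, hF, map_zero, zero_sub] at h
  rw [← h, neg_neg]

lemma polarization_pderiv_one_of_eq_zero (hF : polarization K J F = 0) (α : J) :
    polarization K J (pderiv (α, 1) F) = 0 := by
  have h := congr($(commutator_pderiv_one_polarization (K := K) α) F)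
  rwa [Derivation.commutator_apply, hF, map_zero, zero_sub, Derivation.zero_apply,
    neg_eq_zero] at h

lemma polarization_cayleyOmega (hF : polarization K J F = 0) (α β : J) :
    polarization K J (cayleyOmega α β F) = 0 := by
  rw [cayleyOmega, map_sub,
    polarization_pderiv_zero_of_eq_zero (polarization_pderiv_one_of_eq_zero hF β),
    polarization_pderiv_zero_of_eq_zero (polarization_pderiv_one_of_eq_zero hF α),
    pderiv_pderiv_comm, sub_self]

lemma isWeightedHomogeneous_polarization (h : F.IsWeightedHomogeneous (bideg J) (s, t)) :
    (polarization K J F).IsWeightedHomogeneous (castBideg J) ((s + 1 : ℤ), (t - 1 : ℤ)) := by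
  have h' := h.map ((Nat.castAddMonoidHom ℤ).prodMap (Nat.castAddMonoidHom ℤ))
  rw [polarization_apply]
  refine IsWeightedHomogeneous.sum _ _ _ fun α _ => ?_
  have hX := isWeightedHomogeneous_X K (castBideg J) ((α, 0) : J × Fin 2)
  have hD := h'.pderiv (n' := ((s : ℤ), (t : ℤ) - 1)) (i := ((α, 1) : J × Fin 2)) (by simp)
  convert hX.mul hD using 1
  simp [castBideg, add_comm]

lemma polarization_weightedHomogeneousComponent (hF : polarization K J F = 0) (m : ℕ × ℕ) :
    polarization K J (weightedHomogeneousComponent (bideg J) m F) = 0 := by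
  have hg : Function.Injective fun m : ℕ × ℕ => ((m.1 + 1 : ℤ), (m.2 - 1 : ℤ)) := by
    rintro ⟨a, b⟩ ⟨c, d⟩ h
    simp only [Prod.mk.injEq] at h ⊢
    omega
  exact map_weightedHomogeneousComponent_eq_zero hg (polarization K J).toLinearMap
    (fun _ _ h => isWeightedHomogeneous_polarization h) hF m

lemma sum_bracket_mul_pderiv_pderiv (hF : polarization K J F = 0)
    (h : F.IsWeightedHomogeneous (bideg J) (s, t)) :
    ∑ α : J, ∑ β : J, bracket K α β * pderiv (α, 0) (pderiv (β, 1) F) =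
      ((s + 1) * t) • F := by
  have hx (β : J) :
      ∑ α : J, X (α, 0) * pderiv (α, 0) (pderiv (β, 1) F) = s • pderiv (β, 1) F :=
    sum_X_zero_mul_pderiv (h.pderiv_tsub (β, 1))
  have hP (α : J) : ∑ β : J, X (β, 0) * pderiv (β, 1) (pderiv (α, 0) F) = -pderiv (α, 1) F := by
    rw [← polarization_apply]
    exact polarization_pderiv_zero_of_eq_zero hF α
  calc ∑ α : J, ∑ β : J, bracket K α β * pderiv (α, 0) (pderiv (β, 1) F)
      = ∑ β : J, X (β, 1) * ∑ α : J, X (α, 0) * pderiv (α, 0) (pderiv (β, 1) F)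
        - ∑ α : J, X (α, 1) * ∑ β : J, X (β, 0) * pderiv (β, 1) (pderiv (α, 0) F) := by
        simp only [bracket, sub_mul, Finset.sum_sub_distrib, Finset.mul_sum]
        refine congrArg₂ (· - ·) ?_ ?_
        · rw [Finset.sum_comm]
          exact Finset.sum_congr rfl fun β _ => Finset.sum_congr rfl fun α _ => by ring
        · refine Finset.sum_congr rfl fun α _ => Finset.sum_congr rfl fun β _ => ?_
          rw [pderiv_pderiv_comm (β, 1)]
          ring
    _ = ∑ β : J, X (β, 1) * (s • pderiv (β, 1) F)
        - ∑ α : J, X (α, 1) * -pderiv (α, 1) F := by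
        simp only [hx, hP]
    _ = ((s + 1) * t) • F := by
        simp only [mul_smul_comm, ← Finset.smul_sum, mul_neg, Finset.sum_neg_distrib,
          sum_X_one_mul_pderiv h]
        rw [sub_neg_eq_add, smul_smul, add_one_mul, add_smul]

lemma sum_bracket_mul_cayleyOmega (hF : polarization K J F = 0)
    (h : F.IsWeightedHomogeneous (bideg J) (s, t)) :
    ∑ α : J, ∑ β : J, bracket K α β * cayleyOmega α β F = (2 * ((s + 1) * t)) • F := by
  have hswap : ∑ α : J, ∑ β : J, bracket K α β * pderiv (β, 0) (pderiv (α, 1) F)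
      = -∑ α : J, ∑ β : J, bracket K α β * pderiv (α, 0) (pderiv (β, 1) F) := by
    rw [Finset.sum_comm, ← Finset.sum_neg_distrib]
    refine Finset.sum_congr rfl fun α _ => ?_
    rw [← Finset.sum_neg_distrib]
    exact Finset.sum_congr rfl fun β _ => by rw [bracket_swap, neg_mul]
  simp only [cayleyOmega, mul_sub, Finset.sum_sub_distrib]
  rw [hswap, sub_neg_eq_add, sum_bracket_mul_pderiv_pderiv hF h, ← two_nsmul, smul_smul]

lemma mem_bracketAlgebra_of_isWeightedHomogeneous [CharZero K] (t : ℕ) :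
    ∀ (s : ℕ) (F : MvPolynomial (J × Fin 2) K), polarization K J F = 0 →
      F.IsWeightedHomogeneous (bideg J) (s, t) → F ∈ bracketAlgebra K J := by
  induction t with
  | zero => exact fun s F _ h => mem_bracketAlgebra_of_isWeightedHomogeneous_zero h
  | succ t ih =>
    intro s F hF h
    have hΩ (α β : J) : cayleyOmega α β F ∈ bracketAlgebra K J :=
      ih (s - 1) _ (polarization_cayleyOmega hF α β) (isWeightedHomogeneous_cayleyOmega h α β)
    have hsum : ∑ α : J, ∑ β : J, bracket K α β * cayleyOmega α β F ∈ bracketAlgebra K J :=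
      Subalgebra.sum_mem _ fun α _ => Subalgebra.sum_mem _ fun β _ =>
        Subalgebra.mul_mem _ (Algebra.subset_adjoin (Or.inr ⟨α, β, rfl⟩)) (hΩ α β)
    rw [sum_bracket_mul_cayleyOmega hF h, ← Nat.cast_smul_eq_nsmul K] at hsum
    set c : ℕ := 2 * ((s + 1) * (t + 1))
    have hc : (c : K) ≠ 0 := Nat.cast_ne_zero.2 (by positivity)
    simpa only [inv_smul_smul₀ hc] using Subalgebra.smul_mem _ hsum (c : K)⁻¹

lemma mem_bracketAlgebra_of_polarization_eq_zero [CharZero K] (hF : polarization K J F = 0) :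
    F ∈ bracketAlgebra K J := by
  classical
  have hfin := weightedHomogeneousComponent_finsupp (w := bideg J) F
  rw [← sum_weightedHomogeneousComponent (bideg J) F, finsum_eq_sum _ hfin]
  exact Subalgebra.sum_mem _ fun m _ =>
    mem_bracketAlgebra_of_isWeightedHomogeneous m.2 m.1 _
      (polarization_weightedHomogeneousComponent hF m)
      (weightedHomogeneousComponent_isWeightedHomogeneous m F)

lemma polarization_eq_zero_of_mem_bracketAlgebra (hF : F ∈ bracketAlgebra K J) :
    polarization K J F = 0 := by
  induction hF using Algebra.adjoin_induction with
  | mem P hP =>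
    rcases hP with ⟨α, rfl⟩ | ⟨α, β, rfl⟩
    · exact polarization_X_zero α
    · simp only [bracket, map_sub, Derivation.leibniz, polarization_X_zero, polarization_X_one,
        smul_eq_mul]
      ring
  | algebraMap r => exact (polarization K J).map_algebraMap r
  | add P Q _ _ hP hQ => rw [map_add, hP, hQ, add_zero]
  | mul P Q _ _ hP hQ => rw [Derivation.leibniz, hP, hQ, smul_zero, smul_zero, add_zero]

end BinaryForms

open BinaryForms in
/-- First Fundamental Theorem, semi-invariants: for a finite set `J` of
symbol letters and the derivation `D` of `R_J = K[α₀, α₁ : α ∈ J]` with `D(α₀) = 0`,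
`D(α₁) = α₀`, the kernel of `D` is generated as a `K`-algebra by the variables `α₀`
together with the brackets `[α,β] = α₀β₁ − α₁β₀`. -/
theorem stmt_0 (K : Type*) [Field K] [CharZero K] (J : Type*) [Fintype J]
    (D : Derivation K (MvPolynomial (J × Fin 2) K) (MvPolynomial (J × Fin 2) K))
    (hD : D = MvPolynomial.mkDerivation K
      (fun v : J × Fin 2 => if v.2 = 0 then 0 else X (v.1, 0))) :
    ∀ F : MvPolynomial (J × Fin 2) K,
      D F = 0 ↔ F ∈ Algebra.adjoin K
        ({P | ∃ α : J, P = X (α, 0)} ∪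
         {P | ∃ α β : J, P = X (α, 0) * X (β, 1) - X (α, 1) * X (β, 0)} :
          Set (MvPolynomial (J × Fin 2) K)) := by
  subst hD
  rw [mkDerivation_eq_polarization]
  exact fun F =>
    ⟨mem_bracketAlgebra_of_polarization_eq_zero, polarization_eq_zero_of_mem_bracketAlgebra⟩
end

section
/- Let K be a field of characteristic 0 and d = (d₁,…,d_s) a tuple of positive integers. Let F, G ∈ ker D_d be nonzero E-eigenvectors with E(F) = p·F and E(G) = q·G (so ord F = p and ord G = q), and let 0 ≤ r ≤ min(p,q). If the semi-transvectant [F,G]^r is nonzero, then ord([F,G]^r) = p + q − 2r. -/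
/-!
`D_d`, `D*` and `E` satisfy the `sl₂` relations `⁅D_d, D*⁆ = E` and `⁅E, D*⁆ = -2 D*`.
The normalized sequences `a i = D*^i F / [p]_i` and `b i = D*^i G / [q]_i` satisfy
`D_d a (i+1) = (i+1) a i` and `D_d b (i+1) = (i+1) b i`, so `[F,G]^r = Σ (-1)^i C(r,i) a i b (r-i)`
behaves like `(y - x)^r` under `∂ₓ + ∂_y` and lies in `ker D_d`; it is an `E`-eigenvector of
weight `n = p + q - 2r`. For such a primitive vector `v` the relations give
`D_d D*^(k+1) v = (k+1)(n-k) D*^k v`, so `D*^k v ≠ 0` for `k ≤ n`. On the other hand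
`D*^(n+1) v` would be a primitive vector of weight `-n-2`, none of whose `D*`-powers vanish;
this is impossible because `D*` does not raise the total degree, and `E`-eigenvectors with
distinct eigenvalues in the finite-dimensional space of polynomials of bounded degree are
linearly independent.
-/

open MvPolynomial

/-- The order of a semi-invariant: the least `k` with `D*^{k+1}(S) = 0`. -/
noncomputable def ordFn {K : Type*} [Field K] {σ : Type*}
    (Dstar : Derivation K (MvPolynomial σ K) (MvPolynomial σ K))
    (S : MvPolynomial σ K) : ℕ :=
  sInf {k : ℕ | (Dstar.toLinearMap ^ (k + 1)) S = 0}

/-- The `r`-th semi-transvectant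
`[F,G]^r = Σ_{i=0}^r (−1)^i C(r,i) (D*^i F)/[p]_i · (D*^{r−i} G)/[q]_{r−i}`,
where `[m]_i` is the falling factorial. -/
noncomputable def transv {K : Type*} [Field K] {σ : Type*}
    (Dstar : Derivation K (MvPolynomial σ K) (MvPolynomial σ K))
    (p q r : ℕ) (F G : MvPolynomial σ K) : MvPolynomial σ K :=
  ∑ i ∈ Finset.range (r + 1),
    ((-1 : K) ^ i * (r.choose i : K) * ((p.descFactorial i : K))⁻¹ *
        ((q.descFactorial (r - i) : K))⁻¹) •
      ((Dstar.toLinearMap ^ i) F * (Dstar.toLinearMap ^ (r - i)) G)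

section Sl2

variable {R V : Type*} [CommRing R] [AddCommGroup V] [Module R V] {e f h : Module.End R V}
  {v : V} {c : R}

lemma apply_apply_eq_of_lie_eq {a b l : Module.End R V} (hab : ⁅a, b⁆ = l) (x : V) :
    a (b x) = b (a x) + l x := by
  rw [← hab, Ring.lie_def]
  simp

lemma h_pow_f_apply (hhf : ⁅h, f⁆ = -(2 : R) • f) (hv : h v = c • v) (k : ℕ) :
    h ((f ^ k) v) = (c - 2 * k) • (f ^ k) v := by
  induction k with
  | zero => simpa using hv
  | succ k ih =>
    rw [pow_succ', Module.End.mul_apply, apply_apply_eq_of_lie_eq hhf, ih, map_smul,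
      LinearMap.smul_apply, ← add_smul]
    congr 1
    push_cast
    ring

lemma e_pow_succ_f_apply (hef : ⁅e, f⁆ = h) (hhf : ⁅h, f⁆ = -(2 : R) • f) (he : e v = 0)
    (hv : h v = c • v) (k : ℕ) :
    e ((f ^ (k + 1)) v) = ((k + 1) * (c - k)) • (f ^ k) v := by
  induction k with
  | zero => simp [apply_apply_eq_of_lie_eq hef, he, hv]
  | succ k ih =>
    rw [pow_succ', Module.End.mul_apply, apply_apply_eq_of_lie_eq hef, ih, h_pow_f_apply hhf hv,
      map_smul, ← Module.End.mul_apply, ← pow_succ', ← add_smul]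
    congr 1
    push_cast
    ring

end Sl2

section Sl2Field

variable {K V : Type*} [Field K] [CharZero K] [AddCommGroup V] [Module K V]
  {e f h : Module.End K V} {v : V} {c : K}

lemma pow_f_apply_ne_zero (hef : ⁅e, f⁆ = h) (hhf : ⁅h, f⁆ = -(2 : K) • f) (hv0 : v ≠ 0)
    (he : e v = 0) (hv : h v = c • v) {N : ℕ} (hc : ∀ k < N, (k : K) ≠ c) : (f ^ N) v ≠ 0 := by
  induction N with
  | zero => simpa using hv0
  | succ N ih =>
    intro hN
    have hlower := e_pow_succ_f_apply hef hhf he hv N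
    rw [hN, map_zero, eq_comm, smul_eq_zero] at hlower
    refine hlower.elim (fun hcoeff => ?_) (ih fun k hk => hc k (hk.trans N.lt_succ_self))
    exact mul_ne_zero (Nat.cast_add_one_ne_zero N) (sub_ne_zero.2 (hc N N.lt_succ_self).symm)
      hcoeff

lemma exists_pow_f_apply_eq_zero (hhf : ⁅h, f⁆ = -(2 : K) • f) (hv : h v = c • v)
    {W : Submodule K V} [FiniteDimensional K W] (hfW : ∀ u ∈ W, f u ∈ W) (hvW : v ∈ W) :
    ∃ k, (f ^ k) v = 0 := by
  by_contra! hne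
  have hmem : ∀ k, (f ^ k) v ∈ W := by
    intro k
    induction k with
    | zero => simpa using hvW
    | succ k ih => rw [pow_succ', Module.End.mul_apply]; exact hfW _ ih
  have hinj : Function.Injective fun k : ℕ => c - 2 * k := fun a b hab => by simpa using hab
  have hli := Module.End.eigenvectors_linearIndependent' h _ hinj _ fun k =>
    ⟨Module.End.mem_eigenspace_iff.2 (h_pow_f_apply hhf hv k), hne k⟩
  exact Module.Finite.not_linearIndependent_of_infinite _
    (LinearIndependent.of_comp W.subtype (v := fun k => (⟨_, hmem k⟩ : W)) hli)

lemma pow_succ_f_apply_eq_zero (hef : ⁅e, f⁆ = h) (hhf : ⁅h, f⁆ = -(2 : K) • f) (he : e v = 0)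
    {n : ℕ} (hv : h v = (n : K) • v) (hnil : ∀ u (c : K), h u = c • u → ∃ k, (f ^ k) u = 0) :
    (f ^ (n + 1)) v = 0 := by
  by_contra hu
  have hweight := h_pow_f_apply hhf hv (n + 1)
  obtain ⟨k, hk⟩ := hnil _ _ hweight
  refine pow_f_apply_ne_zero hef hhf hu ?_ hweight (fun i _ hi => ?_) hk
  · rw [e_pow_succ_f_apply hef hhf he hv, sub_self, mul_zero, zero_smul]
  · have : ((i + n + 2 : ℕ) : K) = 0 := by push_cast at hi ⊢; linear_combination hi
    exact absurd (Nat.cast_eq_zero.1 this) (by omega)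

lemma e_inv_descFactorial_smul_pow_succ_f_apply (hef : ⁅e, f⁆ = h)
    (hhf : ⁅h, f⁆ = -(2 : K) • f) (he : e v = 0) {n : ℕ} (hv : h v = (n : K) • v) {i : ℕ}
    (hi : i < n) :
    e ((n.descFactorial (i + 1) : K)⁻¹ • (f ^ (i + 1)) v) =
      ((i : K) + 1) • ((n.descFactorial i : K)⁻¹ • (f ^ i) v) := by
  rw [map_smul, e_pow_succ_f_apply hef hhf he hv, smul_smul, smul_smul, Nat.descFactorial_succ,
    Nat.cast_mul, Nat.cast_sub hi.le]
  have : (n : K) - i ≠ 0 := sub_ne_zero.2 (by exact_mod_cast hi.ne')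
  congr 1
  field_simp

end Sl2Field

section TotalDegree

variable {R σ : Type*} [CommRing R] {g : σ → MvPolynomial σ R}

lemma totalDegree_mkDerivation_monomial_le (hg : ∀ i, (g i).totalDegree ≤ 1) (m : σ →₀ ℕ)
    (a : R) : (mkDerivation R g (monomial m a)).totalDegree ≤ m.sum fun _ k => k := by
  rw [mkDerivation_monomial, Finsupp.sum]
  refine (totalDegree_smul_le _ _).trans <| (totalDegree_finsetSum _ _).trans <|
    Finset.sup_le fun i hi => ?_
  have hle : Finsupp.single i 1 ≤ m :=
    Finsupp.single_le_iff.2 (Nat.one_le_iff_ne_zero.2 (Finsupp.mem_support_iff.1 hi))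
  calc (monomial (m - Finsupp.single i 1) (m i : R) * g i).totalDegree
      ≤ ((m - Finsupp.single i 1).sum fun _ k => k) + 1 :=
        (totalDegree_mul _ _).trans (add_le_add (totalDegree_monomial_le _ _) (hg i))
    _ = m.sum fun _ k => k := by
        conv_rhs => rw [← tsub_add_cancel_of_le hle]
        rw [Finsupp.sum_add_index' (fun _ => rfl) (fun _ _ _ => rfl), Finsupp.sum_single_index rfl]

lemma totalDegree_mkDerivation_le (hg : ∀ i, (g i).totalDegree ≤ 1) (Q : MvPolynomial σ R) :
    (mkDerivation R g Q).totalDegree ≤ Q.totalDegree := by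
  conv_lhs => rw [Q.as_sum, map_sum]
  exact (totalDegree_finsetSum _ _).trans <| Finset.sup_le fun m hm =>
    (totalDegree_mkDerivation_monomial_le hg m _).trans (le_totalDegree hm)

end TotalDegree

section Order

variable {K σ : Type*} [Field K] [CharZero K] [Finite σ]
  {Dstar : Derivation K (MvPolynomial σ K) (MvPolynomial σ K)}
  {e h : Module.End K (MvPolynomial σ K)}

lemma ordFn_eq_of_primitive (hef : ⁅e, Dstar.toLinearMap⁆ = h)
    (hhf : ⁅h, Dstar.toLinearMap⁆ = -(2 : K) • Dstar.toLinearMap)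
    (hdeg : ∀ Q, (Dstar Q).totalDegree ≤ Q.totalDegree) {v : MvPolynomial σ K} (hv0 : v ≠ 0)
    (he : e v = 0) {n : ℕ} (hv : h v = (n : K) • v) : ordFn Dstar v = n := by
  have hnil (u : MvPolynomial σ K) (c : K) (hu : h u = c • u) :
      ∃ k, (Dstar.toLinearMap ^ k) u = 0 :=
    exists_pow_f_apply_eq_zero hhf hu (W := restrictTotalDegree σ K u.totalDegree)
      (fun Q hQ => by
        rw [mem_restrictTotalDegree] at hQ ⊢
        exact (hdeg Q).trans hQ)
      ((mem_restrictTotalDegree _ _ _).2 le_rfl)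
  have hn : n ∈ {k | (Dstar.toLinearMap ^ (k + 1)) v = 0} :=
    pow_succ_f_apply_eq_zero hef hhf he hv hnil
  refine le_antisymm (Nat.sInf_le hn) (le_csInf ⟨n, hn⟩ fun k hk => not_lt.1 fun hkn => ?_)
  exact pow_f_apply_ne_zero hef hhf hv0 he hv (fun i hi => by exact_mod_cast (by omega : i ≠ n))
    hk

end Order

section Transvectant

open Finset

-- `a i` and `b i` behave like `x ^ i` and `y ^ i` under `∂ₓ + ∂_y`, and the sum is `(y - x) ^ r`.
lemma Derivation.map_sum_neg_one_pow_choose_smul_mul_eq_zero {R A : Type*} [CommRing R]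
    [CommRing A] [Algebra R A] (D : Derivation R A A) {a b : ℕ → A} {r : ℕ}
    (ha0 : D (a 0) = 0) (hb0 : D (b 0) = 0) (ha : ∀ i < r, D (a (i + 1)) = ((i : R) + 1) • a i)
    (hb : ∀ i < r, D (b (i + 1)) = ((i : R) + 1) • b i) :
    D (∑ i ∈ range (r + 1), ((-1 : R) ^ i * r.choose i) • (a i * b (r - i))) = 0 := by
  simp only [map_sum, Derivation.map_smul, Derivation.leibniz, smul_add, sum_add_distrib]
  rw [sum_range_succ, sum_range_succ', Nat.sub_self, hb0, ha0]
  simp only [smul_zero, add_zero, ← sum_add_distrib]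
  refine sum_eq_zero fun i hi => ?_
  rw [mem_range] at hi
  have hch : ((r.choose (i + 1) * (i + 1) : ℕ) : A) = (r.choose i * (r - (i + 1) + 1) : ℕ) :=
    congrArg _ ((Nat.choose_succ_right_eq r i).trans
      (by rw [Nat.sub_add_eq, Nat.sub_add_cancel (by omega)]))
  rw [show r - i = r - (i + 1) + 1 by omega, hb _ (by omega), ha i hi]
  simp only [smul_eq_mul, Algebra.smul_def, map_mul, map_pow, map_neg, map_one, map_add,
    _root_.map_natCast]
  push_cast at hch
  linear_combination -(-1 : A) ^ i * a i * b (r - (i + 1)) * hch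

variable {K σ : Type*} [Field K]
  {Dd Dstar E : Derivation K (MvPolynomial σ K) (MvPolynomial σ K)}
  {F G : MvPolynomial σ K} {p q r : ℕ}

lemma transv_eq_sum (Dstar : Derivation K (MvPolynomial σ K) (MvPolynomial σ K)) (p q r : ℕ)
    (F G : MvPolynomial σ K) :
    transv Dstar p q r F G = ∑ i ∈ range (r + 1), ((-1 : K) ^ i * r.choose i) •
      (((p.descFactorial i : K)⁻¹ • (Dstar.toLinearMap ^ i) F) *
        ((q.descFactorial (r - i) : K)⁻¹ • (Dstar.toLinearMap ^ (r - i)) G)) := by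
  refine sum_congr rfl fun i _ => ?_
  rw [smul_mul_smul_comm, smul_smul, ← mul_assoc]

lemma map_transv_eq_zero [CharZero K]
    (hef : ⁅Dd.toLinearMap, Dstar.toLinearMap⁆ = E.toLinearMap)
    (hhf : ⁅E.toLinearMap, Dstar.toLinearMap⁆ = -(2 : K) • Dstar.toLinearMap)
    (hF : Dd F = 0) (hG : Dd G = 0) (hEF : E F = (p : K) • F) (hEG : E G = (q : K) • G)
    (hrp : r ≤ p) (hrq : r ≤ q) : Dd (transv Dstar p q r F G) = 0 := by
  rw [transv_eq_sum]
  refine Dd.map_sum_neg_one_pow_choose_smul_mul_eq_zero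
    (a := fun i => (p.descFactorial i : K)⁻¹ • (Dstar.toLinearMap ^ i) F)
    (b := fun i => (q.descFactorial i : K)⁻¹ • (Dstar.toLinearMap ^ i) G)
    ?_ ?_ (fun i hi => ?_) (fun i hi => ?_)
  · simpa using hF
  · simpa using hG
  · exact e_inv_descFactorial_smul_pow_succ_f_apply hef hhf hF hEF (by omega)
  · exact e_inv_descFactorial_smul_pow_succ_f_apply hef hhf hG hEG (by omega)

lemma map_transv_eq_smul
    (hhf : ⁅E.toLinearMap, Dstar.toLinearMap⁆ = -(2 : K) • Dstar.toLinearMap)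
    (hEF : E F = (p : K) • F) (hEG : E G = (q : K) • G) :
    E (transv Dstar p q r F G) = ((p : K) + q - 2 * r) • transv Dstar p q r F G := by
  rw [transv, map_sum, smul_sum]
  refine sum_congr rfl fun i hi => ?_
  have hir : i ≤ r := Nat.lt_succ_iff.1 (mem_range.1 hi)
  rw [Derivation.map_smul, smul_comm, Derivation.leibniz, ← Derivation.coeFn_coe E,
    h_pow_f_apply hhf hEF, h_pow_f_apply hhf hEG]
  simp only [smul_eq_mul, smul_eq_C_mul, Nat.cast_sub hir, map_sub, map_add, map_mul, map_natCast,
    map_ofNat]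
  ring

end Transvectant

section Weitzenbock

variable (R : Type*) [CommRing R] {ι : Type*} (d : ι → ℕ)

-- The paper's `D_d`, `D*` and `E`, with `x_{j,i}` encoded as `X ⟨j, i⟩`.
noncomputable def weitzenbock :
    Derivation R (MvPolynomial (Σ j, Fin (d j + 1)) R) (MvPolynomial (Σ j, Fin (d j + 1)) R) :=
  mkDerivation R fun v =>
    if h : (v.2 : ℕ) = 0 then 0 else X ⟨v.1, ⟨(v.2 : ℕ) - 1, by omega⟩⟩

noncomputable def weitzenbockDual :
    Derivation R (MvPolynomial (Σ j, Fin (d j + 1)) R) (MvPolynomial (Σ j, Fin (d j + 1)) R) :=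
  mkDerivation R fun v =>
    if h : (v.2 : ℕ) < d v.1 then
      ((((v.2 : ℕ) + 1) * (d v.1 - (v.2 : ℕ)) : ℕ) : MvPolynomial (Σ j, Fin (d j + 1)) R) *
        X ⟨v.1, ⟨(v.2 : ℕ) + 1, by omega⟩⟩
    else 0

noncomputable def weitzenbockWeight :
    Derivation R (MvPolynomial (Σ j, Fin (d j + 1)) R) (MvPolynomial (Σ j, Fin (d j + 1)) R) :=
  mkDerivation R fun v => ((d v.1 : R) - 2 * ((v.2 : ℕ) : R)) • X v

variable {R d}

lemma lie_weitzenbock_weitzenbockDual :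
    ⁅weitzenbock R d, weitzenbockDual R d⁆ = weitzenbockWeight R d := by
  refine derivation_ext fun ⟨j, i, hi⟩ => ?_
  simp only [Derivation.commutator_apply, weitzenbock, weitzenbockDual, weitzenbockWeight,
    mkDerivation_X]
  rcases i with _ | i
  · by_cases hd : 0 < d j
    · simp [hd, Derivation.leibniz, smul_eq_C_mul]
    · simp [Nat.eq_zero_of_not_pos hd]
  · by_cases hd : i + 1 < d j
    · have hd' : i < d j := by omega
      simp [hd, hd', Derivation.leibniz, smul_eq_C_mul, Nat.cast_sub hd.le, Nat.cast_sub hd'.le,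
        map_ofNat]
      ring
    · have hd' : d j = i + 1 := by omega
      simp [hd', smul_eq_C_mul, map_ofNat]
      ring

lemma lie_weitzenbockWeight_weitzenbockDual :
    ⁅weitzenbockWeight R d, weitzenbockDual R d⁆ = -(2 : R) • weitzenbockDual R d := by
  refine derivation_ext fun ⟨j, i, hi⟩ => ?_
  simp only [Derivation.commutator_apply, Derivation.smul_apply, weitzenbockDual,
    weitzenbockWeight, mkDerivation_X]
  by_cases hd : i < d j
  · simp [hd, Derivation.leibniz, smul_eq_C_mul]
    ring
  · simp [hd]

lemma totalDegree_weitzenbockDual_le [Nontrivial R] (Q : MvPolynomial (Σ j, Fin (d j + 1)) R) :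
    (weitzenbockDual R d Q).totalDegree ≤ Q.totalDegree := by
  refine totalDegree_mkDerivation_le (fun v => ?_) Q
  split_ifs
  · refine (totalDegree_mul _ _).trans ?_
    rw [← C_eq_coe_nat, totalDegree_C, totalDegree_X]
  · simp

end Weitzenbock

/-- if `F, G ∈ ker D_d` are nonzero `E`-eigenvectors with eigenvalues `p, q`
(so `ord F = p`, `ord G = q`), `0 ≤ r ≤ min(p,q)`, and the semi-transvectant `[F,G]^r` is
nonzero, then `ord [F,G]^r = p + q − 2r`. -/
theorem stmt_10 (K : Type*) [Field K] [CharZero K] (s : ℕ)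
    (d : Fin s → ℕ)
    (Dd Dstar E : Derivation K (MvPolynomial (Σ j : Fin s, Fin (d j + 1)) K)
      (MvPolynomial (Σ j : Fin s, Fin (d j + 1)) K))
    (hDd : Dd = MvPolynomial.mkDerivation K
      (fun v : Σ j : Fin s, Fin (d j + 1) =>
        if h : (v.2 : ℕ) = 0 then 0
        else X (⟨v.1, ⟨(v.2 : ℕ) - 1, by omega⟩⟩ : Σ j : Fin s, Fin (d j + 1))))
    (hDstar : Dstar = MvPolynomial.mkDerivation K
      (fun v : Σ j : Fin s, Fin (d j + 1) =>
        if h : (v.2 : ℕ) < d v.1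
          then ((((v.2 : ℕ) + 1) * (d v.1 - (v.2 : ℕ)) : ℕ) :
                MvPolynomial (Σ j : Fin s, Fin (d j + 1)) K) *
            X (⟨v.1, ⟨(v.2 : ℕ) + 1, by omega⟩⟩ : Σ j : Fin s, Fin (d j + 1))
          else 0))
    (hE : E = MvPolynomial.mkDerivation K
      (fun v : Σ j : Fin s, Fin (d j + 1) =>
        ((d v.1 : K) - 2 * ((v.2 : ℕ) : K)) • X v))
    (F G : MvPolynomial (Σ j : Fin s, Fin (d j + 1)) K)
    (hFker : Dd F = 0) (hGker : Dd G = 0)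
    (p q : ℕ) (hEF : E F = (p : K) • F) (hEG : E G = (q : K) • G)
    (r : ℕ) (hr : r ≤ min p q)
    (hne : transv Dstar p q r F G ≠ 0) :
    ordFn Dstar (transv Dstar p q r F G) = p + q - 2 * r := by
  obtain rfl : Dd = weitzenbock K d := hDd
  obtain rfl : Dstar = weitzenbockDual K d := hDstar
  obtain rfl : E = weitzenbockWeight K d := hE
  have hef : ⁅(weitzenbock K d).toLinearMap, (weitzenbockDual K d).toLinearMap⁆ =
      (weitzenbockWeight K d).toLinearMap := by
    rw [← Derivation.commutator_coe_linear_map, lie_weitzenbock_weitzenbockDual]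
  have hhf : ⁅(weitzenbockWeight K d).toLinearMap, (weitzenbockDual K d).toLinearMap⁆ =
      -(2 : K) • (weitzenbockDual K d).toLinearMap := by
    rw [← Derivation.commutator_coe_linear_map, lie_weitzenbockWeight_weitzenbockDual,
      Derivation.coe_smul_linearMap]
  have hrp : r ≤ p := hr.trans (min_le_left p q)
  have hrq : r ≤ q := hr.trans (min_le_right p q)
  refine ordFn_eq_of_primitive hef hhf totalDegree_weitzenbockDual_le hne
    (map_transv_eq_zero hef hhf hFker hGker hEF hEG hrp hrq) ?_
  rw [Derivation.coeFn_coe, map_transv_eq_smul hhf hEF hEG, Nat.cast_sub (by omega)]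
  push_cast
  ring
end

section
/- Let K be a field of characteristic 0, k a positive integer, and let D be the K-derivation of K[x₀, x₁, …, x_{2k}] with D(x₀) = 0 and D(x_i) = x_{i−1} for 1 ≤ i ≤ 2k. Then the catalecticant, i.e. the determinant of the (k+1)×(k+1) matrix M with entries M_{i,j} = (i+j)!·x_{i+j} for 0 ≤ i, j ≤ k, lies in ker D (it is a semi-invariant of degree k+1). -/
/-!
The catalecticant is the determinant of the Hankel matrix `H = (a (i + j))` of the sequence
`a m = m! x_m`, and `D (a m) = m a (m - 1)`. Hence `D` acts entrywise on `H` as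
`N H + H Nᵀ`, where `N` is the strictly lower triangular shift with weights `1, 2, …, k`.
By Jacobi's formula `D (det H) = tr (adj H · D H) = (tr N + tr Nᵀ) det H`, and `tr N = 0`.
-/

open MvPolynomial

namespace Derivation

section Prod

variable {R A M : Type*} [CommSemiring R] [CommSemiring A] [Algebra R A] [AddCommMonoid M]
  [Module A M] [Module R M]

theorem leibniz_prod (d : Derivation R A M) {ι : Type*} [DecidableEq ι] (s : Finset ι)
    (f : ι → A) : d (∏ i ∈ s, f i) = ∑ i ∈ s, (∏ j ∈ s.erase i, f j) • d (f i) := by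
  induction s using Finset.induction_on with
  | empty => simp
  | insert a s ha ih =>
    rw [Finset.prod_insert ha, d.leibniz, ih, Finset.sum_insert ha, Finset.erase_insert ha,
      Finset.smul_sum, add_comm]
    congr 1
    refine Finset.sum_congr rfl fun i hi => ?_
    rw [Finset.erase_insert_of_ne (by rintro rfl; exact ha hi),
      Finset.prod_insert (fun h => ha (Finset.mem_of_mem_erase h)), smul_smul]

end Prod

section Det

variable {R A : Type*} [CommSemiring R] [CommRing A] [Algebra R A]
  {n : Type*} [DecidableEq n] [Fintype n]

theorem map_det_eq_sum_det_updateCol (d : Derivation R A A) (M : Matrix n n A) :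
    d M.det = ∑ c, (M.updateCol c fun i => d (M i c)).det := by
  have hcol (c : n) : (M.updateCol c fun i => d (M i c)).det
      = ∑ σ : Equiv.Perm n, Equiv.Perm.sign σ •
          ((∏ i ∈ Finset.univ.erase c, M (σ i) i) * d (M (σ c) c)) := by
    rw [Matrix.det_apply]
    refine Finset.sum_congr rfl fun σ _ => ?_
    rw [← Finset.mul_prod_erase Finset.univ _ (Finset.mem_univ c), mul_comm,
      Matrix.updateCol_self]
    congr 2
    exact Finset.prod_congr rfl fun i hi => Matrix.updateCol_ne (Finset.ne_of_mem_erase hi)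
  simp_rw [hcol, Matrix.det_apply, map_sum]
  rw [Finset.sum_comm]
  refine Finset.sum_congr rfl fun σ _ => ?_
  rw [Units.smul_def, map_zsmul, leibniz_prod, Finset.smul_sum]
  rfl

/-- Jacobi's formula. -/
theorem map_det (d : Derivation R A A) (M : Matrix n n A) :
    d M.det = (M.adjugate * M.map d).trace := by
  simp only [map_det_eq_sum_det_updateCol, ← Matrix.cramer_apply,
    Matrix.cramer_eq_adjugate_mulVec, Matrix.trace, Matrix.diag, Matrix.mul_apply,
    Matrix.mulVec, dotProduct, Matrix.map_apply]

theorem map_det_eq_trace_mul_det (d : Derivation R A A) {M P Q : Matrix n n A}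
    (hM : M.map d = P * M + M * Q) : d M.det = (P.trace + Q.trace) * M.det := by
  rw [map_det, hM, Matrix.mul_add, Matrix.trace_add, ← Matrix.mul_assoc, Matrix.trace_mul_comm,
    ← Matrix.mul_assoc, Matrix.mul_adjugate, ← Matrix.mul_assoc, Matrix.adjugate_mul,
    Matrix.smul_mul, Matrix.smul_mul, Matrix.one_mul, Matrix.one_mul, Matrix.trace_smul,
    Matrix.trace_smul, smul_eq_mul, smul_eq_mul]
  ring

end Det

end Derivation

namespace Matrix

def hankel {A : Type*} {n : ℕ} (a : ℕ → A) : Matrix (Fin n) (Fin n) A :=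
  of fun i j => a (i + j)

def weightedShift (n : ℕ) (A : Type*) [Zero A] [NatCast A] : Matrix (Fin n) (Fin n) A :=
  of fun i j => if (i : ℕ) = j + 1 then (i : A) else 0

theorem hankel_transpose {A : Type*} {n : ℕ} (a : ℕ → A) :
    (hankel a : Matrix (Fin n) (Fin n) A)ᵀ = hankel a := by
  ext i j
  simp only [hankel, transpose_apply, of_apply, add_comm]

variable {A : Type*} [CommSemiring A] {n : ℕ}

theorem trace_weightedShift : (weightedShift n A).trace = 0 :=
  Finset.sum_eq_zero fun i _ => if_neg (by simp)

theorem weightedShift_mul_hankel_apply (a : ℕ → A) (i j : Fin n) :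
    (weightedShift n A * hankel a : Matrix (Fin n) (Fin n) A) i j = i * a (i + j - 1) := by
  rw [mul_apply]
  rcases Nat.eq_zero_or_pos (i : ℕ) with hi | hi
  · simp [weightedShift, hi]
  · rw [Finset.sum_eq_single ⟨i - 1, by omega⟩]
    · simp [weightedShift, hankel, Nat.sub_add_cancel hi, Nat.sub_add_comm hi]
    · intro l _ hl
      simp only [weightedShift, of_apply, ite_mul, zero_mul]
      exact if_neg fun h => hl (Fin.ext (by simp; omega))
    · simp

theorem hankel_mul_weightedShift_transpose_apply (a : ℕ → A) (i j : Fin n) :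
    (hankel a * (weightedShift n A)ᵀ : Matrix (Fin n) (Fin n) A) i j = j * a (i + j - 1) := by
  rw [← hankel_transpose, ← transpose_mul, transpose_apply, weightedShift_mul_hankel_apply,
    add_comm]

theorem map_hankel {R : Type*} [CommSemiring R] [Algebra R A] (d : Derivation R A A)
    (a : ℕ → A) (ha : ∀ m < 2 * n - 1, d (a m) = m * a (m - 1)) :
    (hankel a).map d = weightedShift n A * hankel a + hankel a * (weightedShift n A)ᵀ := by
  ext i j
  rw [add_apply, weightedShift_mul_hankel_apply, hankel_mul_weightedShift_transpose_apply,
    map_apply, hankel, of_apply, ha _ (by omega), ← add_mul, Nat.cast_add]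

end Matrix

theorem Derivation.map_det_hankel {R A : Type*} [CommSemiring R] [CommRing A] [Algebra R A]
    (d : Derivation R A A) {n : ℕ} (a : ℕ → A) (ha : ∀ m < 2 * n - 1, d (a m) = m * a (m - 1)) :
    d (Matrix.hankel a : Matrix (Fin n) (Fin n) A).det = 0 := by
  rw [d.map_det_eq_trace_mul_det (Matrix.map_hankel d a ha), Matrix.trace_transpose,
    Matrix.trace_weightedShift, add_zero, zero_mul]

/-- The catalecticant, the determinant of the `(k+1)×(k+1)` matrix with
`(i,j)` entry `(i+j)! · x_{i+j}`, lies in the kernel of the basic Weitzenböck derivation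
`D` of `K[x₀,…,x_{2k}]`. -/
theorem stmt_16 (K : Type*) [Field K] [CharZero K] (k : ℕ)
    (D : Derivation K (MvPolynomial (Fin (2 * k + 1)) K) (MvPolynomial (Fin (2 * k + 1)) K))
    (hD : D = MvPolynomial.mkDerivation K
      (fun i : Fin (2 * k + 1) =>
        if h : (i : ℕ) = 0 then 0 else X (⟨(i : ℕ) - 1, by omega⟩ : Fin (2 * k + 1)))) :
    D (Matrix.det (Matrix.of (fun i j : Fin (k + 1) =>
        (((i : ℕ) + (j : ℕ)).factorial : MvPolynomial (Fin (2 * k + 1)) K) *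
          X (⟨(i : ℕ) + (j : ℕ), by omega⟩ : Fin (2 * k + 1))))) = 0 := by
  set a : ℕ → MvPolynomial (Fin (2 * k + 1)) K :=
    fun m => if h : m < 2 * k + 1 then (m.factorial : MvPolynomial _ K) * X ⟨m, h⟩ else 0
  have hcat : Matrix.of (fun i j : Fin (k + 1) =>
      (((i : ℕ) + (j : ℕ)).factorial : MvPolynomial (Fin (2 * k + 1)) K) *
        X (⟨(i : ℕ) + (j : ℕ), by omega⟩ : Fin (2 * k + 1))) = Matrix.hankel a := by
    ext i j
    simp only [Matrix.hankel, Matrix.of_apply, a, dif_pos (by omega : (i : ℕ) + j < 2 * k + 1)]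
  refine hcat ▸ D.map_det_hankel a fun m hm => ?_
  rcases m with _ | m
  · simp [a, hD]
  · have hm' : m + 1 < 2 * k + 1 := by omega
    simp only [a, dif_pos hm', dif_pos (by omega : m < 2 * k + 1), Nat.add_sub_cancel]
    rw [D.leibniz, D.map_natCast, smul_zero, add_zero, hD, mkDerivation_X, dif_neg (by simp),
      smul_eq_mul, Nat.factorial_succ]
    push_cast
    ring
end
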